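/- arXiv:2103.02056 — 5 statements merged into one kernel-verified Lean document; each statement's English description precedes it below -/
import Mathlib

section
/- Honest Bob condition: let P₀ > 0, 0 ≤ δ ≤ P₀/2, αᵦ > 0, and μₐ ∈ [0,1]. Define, for P₁ ∈ {P₀−δ, P₀+δ}, U_c(P₁) = μₐ·(P₁ − P₀ + αᵦ) + (1−μₐ)·(−αᵦ + P₁/2 − P₀) and U_s(P₁) = −αᵦ + P₁/2. Then U_c(P₁) > U_s(P₁) for both values of P₁ if and only if μₐ > 2P₀ / (4αᵦ + P₀ − δ). -/
/-! The gain of continuing over stopping simplifies to `μa * (P₁ + 4αb) / 2 - P₀`. Since `μa ≥ 0`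
this is monotone in `P₁`, so it is positive in both price states iff it is positive in the
worst one, `P₁ = P₀ - δ`, which is the stated bound on `μa`. -/

theorem continue_gt_stop_iff (P₀ P₁ αb μa : ℝ) :
    μa * (P₁ - P₀ + αb) + (1 - μa) * (-αb + P₁ / 2 - P₀) > -αb + P₁ / 2 ↔
      2 * P₀ < μa * (P₁ + 4 * αb) := by
  have gain : μa * (P₁ - P₀ + αb) + (1 - μa) * (-αb + P₁ / 2 - P₀) - (-αb + P₁ / 2) =
      (μa * (P₁ + 4 * αb) - 2 * P₀) / 2 := by ring
  constructor <;> intro h <;> linarith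

theorem mul_add_lt_mul_add_of_le {μ P P' c b : ℝ} (hμ : 0 ≤ μ) (hP : P ≤ P')
    (h : b < μ * (P + c)) : b < μ * (P' + c) :=
  h.trans_le (mul_le_mul_of_nonneg_left (by linarith) hμ)

theorem honest_bob_condition_general (P₀ δ αb μa : ℝ)
    (hδ0 : 0 ≤ δ) (hμ0 : 0 ≤ μa) (hden : 0 < 4 * αb + P₀ - δ) :
    (∀ P₁ : ℝ, (P₁ = P₀ - δ ∨ P₁ = P₀ + δ) →
      μa * (P₁ - P₀ + αb) + (1 - μa) * (-αb + P₁ / 2 - P₀) > -αb + P₁ / 2)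
    ↔ μa > 2 * P₀ / (4 * αb + P₀ - δ) := by
  have worst_case : P₀ - δ + 4 * αb = 4 * αb + P₀ - δ := by ring
  simp only [continue_gt_stop_iff]
  rw [gt_iff_lt, div_lt_iff₀ hden, ← worst_case]
  constructor
  · exact fun h => h _ (Or.inl rfl)
  · rintro h P₁ (rfl | rfl)
    · exact h
    · exact mul_add_lt_mul_add_of_le hμ0 (by linarith) h

/-- Honest Bob condition: continuing beats stopping in both price states iff
`μa > 2P₀ / (4αb + P₀ - δ)`. -/
theorem honest_bob_condition (P₀ δ αb μa : ℝ)
    (hP₀ : 0 < P₀) (hδ0 : 0 ≤ δ) (hδ2 : δ ≤ P₀ / 2) (hαb : 0 < αb)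
    (hμ0 : 0 ≤ μa) (hμ1 : μa ≤ 1) (hden : 0 < 4 * αb + P₀ - δ) :
    (∀ P₁ : ℝ, (P₁ = P₀ - δ ∨ P₁ = P₀ + δ) →
      μa * (P₁ - P₀ + αb) + (1 - μa) * (-αb + P₁ / 2 - P₀) > -αb + P₁ / 2)
    ↔ μa > 2 * P₀ / (4 * αb + P₀ - δ) :=
  honest_bob_condition_general P₀ δ αb μa hδ0 hμ0 hden
end

section
/- Combined honest-Alice characterization: Alice is honest in the 3-step packetized payment game if and only if αₐ > (P₀ + 2δ)/4 and μᵦ > P₀/(4αₐ + P₀); i.e., the conjunction of the final-step inequality (for all P₂ ∈ {P₀−2δ, P₀, P₀+2δ}: αₐ + P₀ − P₂ > −αₐ + P₀ − P₂/2) and the initial-step inequality (μᵦ·αₐ + (1−μᵦ)·(−αₐ − P₀/2) > −αₐ) is equivalent to the stated pair of conditions. -/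
/-! At the last step continuing beats stopping exactly when `P₂ < 4 αa`, so among the three
possible prices only the highest one, `P₀ + 2δ`, constrains Alice. At the first step the gain
from continuing is `(μb (4 αa + P₀) - P₀) / 2`, and `4 αa + P₀ > 0` because the last-step
condition already forces `4 αa > P₀ + 2δ > 0`; this gives the threshold `P₀ / (4 αa + P₀)`. -/

theorem last_step_continue_gt_stop_iff (αa P₀ P₂ : ℝ) :
    αa + P₀ - P₂ > -αa + P₀ - P₂ / 2 ↔ P₂ / 4 < αa := by
  constructor <;> intro h <;> linarith

theorem last_step_continue_gt_stop_at_all_prices_iff {P₀ δ αa : ℝ} (hδ : 0 ≤ δ) :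
    (∀ P₂ : ℝ, (P₂ = P₀ - 2 * δ ∨ P₂ = P₀ ∨ P₂ = P₀ + 2 * δ) →
        αa + P₀ - P₂ > -αa + P₀ - P₂ / 2) ↔ (P₀ + 2 * δ) / 4 < αa := by
  simp only [last_step_continue_gt_stop_iff]
  constructor
  · intro h
    exact h _ (Or.inr (Or.inr rfl))
  · rintro h P₂ (rfl | rfl | rfl) <;> linarith

theorem first_step_continue_gt_stop_iff {P₀ αa μb : ℝ} (h : 0 < 4 * αa + P₀) :
    μb * αa + (1 - μb) * (-αa - P₀ / 2) > -αa ↔ P₀ / (4 * αa + P₀) < μb := by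
  rw [div_lt_iff₀ h]
  constructor <;> intro h <;> linarith

theorem honest_alice_characterization_general (P₀ δ αa μb : ℝ)
    (hP₀ : 0 < P₀) (hδ : 0 ≤ δ) :
    ((∀ P₂ : ℝ, (P₂ = P₀ - 2 * δ ∨ P₂ = P₀ ∨ P₂ = P₀ + 2 * δ) →
        αa + P₀ - P₂ > -αa + P₀ - P₂ / 2) ∧
      μb * αa + (1 - μb) * (-αa - P₀ / 2) > -αa)
    ↔ (αa > (P₀ + 2 * δ) / 4 ∧ μb > P₀ / (4 * αa + P₀)) := by
  rw [last_step_continue_gt_stop_at_all_prices_iff hδ]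
  exact and_congr_right fun hαa => first_step_continue_gt_stop_iff (by linarith)

/-- Combined honest-Alice characterization: the conjunction of the final-step
inequalities and the initial-step inequality is equivalent to
`αa > (P₀ + 2δ)/4` and `μb > P₀/(4αa + P₀)`. -/
theorem honest_alice_characterization (P₀ δ αa μb : ℝ)
    (hP₀ : 0 < P₀) (hδ : 0 ≤ δ) (hαa : 0 < αa) (hμ0 : 0 ≤ μb) (hμ1 : μb ≤ 1) :
    ((∀ P₂ : ℝ, (P₂ = P₀ - 2 * δ ∨ P₂ = P₀ ∨ P₂ = P₀ + 2 * δ) →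
        αa + P₀ - P₂ > -αa + P₀ - P₂ / 2) ∧
      μb * αa + (1 - μb) * (-αa - P₀ / 2) > -αa)
    ↔ (αa > (P₀ + 2 * δ) / 4 ∧ μb > P₀ / (4 * αa + P₀)) :=
  honest_alice_characterization_general P₀ δ αa μb hP₀ hδ
end

section
/- Collateral deters malicious Bob: if Bob posts collateral C > (P₀ + δ)/2 that he forfeits upon stopping, then for every realization P₁ ∈ {P₀−δ, P₀+δ} and every μₐ ∈ [0,1], a malicious Bob's utility from stopping, P₁/2 − C, is strictly less than his expected utility from continuing, μₐ·(P₁ − P₀) + (1−μₐ)·(P₁/2 − P₀ + C'), where C' ≥ (P₀ + 2δ)/2 is Alice's forfeited collateral he may receive; in particular P₁/2 − C < μₐ·(P₁ − P₀) + (1−μₐ)·(P₁/2 − P₀ + C'). -/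
/-- Collateral deters malicious Bob: with collateral `C > (P₀+δ)/2` for Bob and
`C' ≥ (P₀+2δ)/2` for Alice, stopping is strictly worse than continuing for a
malicious Bob, in every price state and for every belief `μa`. -/
theorem collateral_deters_malicious_bob (P₀ δ C C' μa P₁ : ℝ)
    (hP₀ : 0 < P₀) (hδ : 0 < δ) (hδ2 : δ ≤ P₀ / 2)
    (hC : C > (P₀ + δ) / 2) (hC' : C' ≥ (P₀ + 2 * δ) / 2)
    (hμ0 : 0 ≤ μa) (hμ1 : μa ≤ 1)
    (hP₁ : P₁ = P₀ - δ ∨ P₁ = P₀ + δ) :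
    P₁ / 2 - C < μa * (P₁ - P₀) + (1 - μa) * (P₁ / 2 - P₀ + C') := by
  rcases hP₁ with h | h <;> subst h <;> nlinarith [mul_nonneg hμ0 hδ.le, mul_nonneg (sub_nonneg.2 hμ1) hδ.le]
end

section
/- Collateral deters malicious Alice at the final step: if Alice posts collateral C' > (P₀ + 2δ)/2 forfeited upon stopping, then for every P₂ ∈ {P₀ − 2δ, P₀, P₀ + 2δ}, her utility from continuing, P₀ − P₂, strictly exceeds her utility from stopping, P₀ − P₂/2 − C'. -/
/-- Collateral deters malicious Alice at the final step: with collateral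
`C' > (P₀ + 2δ)/2`, continuing strictly beats stopping in every price state. -/
theorem collateral_deters_malicious_alice (P₀ δ C' : ℝ)
    (hP₀ : 0 < P₀) (hδ0 : 0 ≤ δ) (hδ2 : δ ≤ P₀ / 2)
    (hC' : C' > (P₀ + 2 * δ) / 2) :
    ∀ P₂ : ℝ, (P₂ = P₀ - 2 * δ ∨ P₂ = P₀ ∨ P₂ = P₀ + 2 * δ) →
      P₀ - P₂ > P₀ - P₂ / 2 - C' := by
  rintro P₂ (rfl | rfl | rfl) <;> linarith
end

section
/- Strict dominance of stopping for the malicious type regardless of beliefs: for all μₐ ∈ [0,1], P₀ > 0, and 0 < δ < P₀/2, the gap g(μₐ, P₁) = P₁/2 − [μₐ·(P₁ − P₀) + (1−μₐ)·(P₁/2 − P₀)] satisfies g(μₐ, P₁) = P₀ − μₐ·P₁/2 ≥ P₀ − (P₀+δ)/2 > 0 for P₁ ∈ {P₀−δ, P₀+δ}. -/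
/-- Strict dominance of stopping for the malicious type regardless of beliefs:
the gap equals `P₀ - μa * P₁ / 2`, is at least `P₀ - (P₀ + δ)/2`, and is positive. -/
theorem stopping_strictly_dominates (P₀ δ μa P₁ : ℝ)
    (hP₀ : 0 < P₀) (hδ : 0 < δ) (hδ2 : δ < P₀ / 2)
    (hμ0 : 0 ≤ μa) (hμ1 : μa ≤ 1)
    (hP₁ : P₁ = P₀ - δ ∨ P₁ = P₀ + δ) :
    P₁ / 2 - (μa * (P₁ - P₀) + (1 - μa) * (P₁ / 2 - P₀)) = P₀ - μa * P₁ / 2 ∧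
    P₁ / 2 - (μa * (P₁ - P₀) + (1 - μa) * (P₁ / 2 - P₀)) ≥ P₀ - (P₀ + δ) / 2 ∧
    0 < P₀ - (P₀ + δ) / 2 := by
  refine ⟨by ring, ?_, by linarith⟩
  have h : μa * P₁ ≤ P₀ + δ := by
    rcases hP₁ with h | h <;> nlinarith
  linarith
end
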